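/- For every n ≥ 1 and every centrally symmetric convex body K ⊂ ℝ^{2n}, there exists a unit vector v ∈ ℝ^{2n} such that the orthogonal projection of K onto the two-dimensional subspace E = span{v, Jv} is contained in the closed disc in E of radius 3√2·M*(K) centered at the origin, where J is the standard complex structure. -/

import Mathlib

open MeasureTheory Metric
open scoped BigOperators

noncomputable section

/-- A convex body: compact convex set with nonempty interior. -/
def IsConvexBody {d : ℕ} (K : Set (EuclideanSpace ℝ (Fin d))) : Prop :=
  IsCompact K ∧ Convex ℝ K ∧ (interior K).Nonempty

/-- The standard symplectic form on `ℝ^{2n}` with coordinates ordered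
`(x₁, y₁, …, xₙ, yₙ)`: `ω = ∑ dxⱼ ∧ dyⱼ`. -/
def symplForm (n : ℕ) (u v : EuclideanSpace ℝ (Fin (2 * n))) : ℝ :=
  ∑ j : Fin n,
    (u ⟨2 * (j : ℕ), by have := j.isLt; omega⟩ * v ⟨2 * (j : ℕ) + 1, by have := j.isLt; omega⟩
      - u ⟨2 * (j : ℕ) + 1, by have := j.isLt; omega⟩ * v ⟨2 * (j : ℕ), by have := j.isLt; omega⟩)

/-- A linear map of `ℝ^{2n}` is symplectic if it preserves the standard symplectic form. -/
def IsLinearSymplectic (n : ℕ)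
    (S : EuclideanSpace ℝ (Fin (2 * n)) →ₗ[ℝ] EuclideanSpace ℝ (Fin (2 * n))) : Prop :=
  ∀ u v, symplForm n (S u) (S v) = symplForm n u v

/-- The `k`-th coordinate of a vector (with value `0` if `k` is out of range). -/
def coordOr {m : ℕ} (x : EuclideanSpace ℝ (Fin m)) (k : ℕ) : ℝ :=
  if h : k < m then x ⟨k, h⟩ else 0

/-- The open symplectic cylinder `Z(r) = {x : x₁² + x₂² < r²}`. -/
def symplCylinder (n : ℕ) (r : ℝ) : Set (EuclideanSpace ℝ (Fin (2 * n))) :=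
  {x | coordOr x 0 ^ 2 + coordOr x 1 ^ 2 < r ^ 2}

/-- The linear cylindrical capacity. -/
def linCylCapacity (n : ℕ) (U : Set (EuclideanSpace ℝ (Fin (2 * n)))) : ℝ :=
  sInf {c : ℝ | ∃ r : ℝ, 0 < r ∧ c = Real.pi * r ^ 2 ∧
    ∃ S : EuclideanSpace ℝ (Fin (2 * n)) →ₗ[ℝ] EuclideanSpace ℝ (Fin (2 * n)),
      IsLinearSymplectic n S ∧ S '' U ⊆ symplCylinder n r}

/-- The linear symplectic radius. -/
def linSymplRadius (n : ℕ) (U : Set (EuclideanSpace ℝ (Fin (2 * n)))) : ℝ :=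
  sSup {c : ℝ | ∃ r : ℝ, 0 < r ∧ c = Real.pi * r ^ 2 ∧
    ∃ S : EuclideanSpace ℝ (Fin (2 * n)) →ₗ[ℝ] EuclideanSpace ℝ (Fin (2 * n)),
      IsLinearSymplectic n S ∧ S '' (closedBall (0 : EuclideanSpace ℝ (Fin (2 * n))) r) ⊆ U}

/-- The standard complex structure `J` on `ℝ^{2n}`, sending
`(x₁,y₁,…,xₙ,yₙ)` to `(−y₁,x₁,…,−yₙ,xₙ)`. -/
def Jstd (n : ℕ) (x : EuclideanSpace ℝ (Fin (2 * n))) : EuclideanSpace ℝ (Fin (2 * n)) :=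
  WithLp.toLp 2 (fun i : Fin (2 * n) => if h : (i : ℕ) % 2 = 0
    then - x ⟨(i : ℕ) + 1, by have := i.isLt; omega⟩
    else x ⟨(i : ℕ) - 1, by have := i.isLt; omega⟩)

/-- The support function `x ↦ sup_{y ∈ K} ⟨x, y⟩`. -/
def suppF {d : ℕ} (K : Set (EuclideanSpace ℝ (Fin d))) (x : EuclideanSpace ℝ (Fin d)) : ℝ :=
  sSup ((fun y => (inner ℝ x y : ℝ)) '' K)

/-- The sign vector `ε ∈ {−1/√(2n), 1/√(2n)}^{2n}` associated to `ε : Fin (2n) → Bool`. -/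
def signVec (n : ℕ) (ε : Fin (2 * n) → Bool) : EuclideanSpace ℝ (Fin (2 * n)) :=
  WithLp.toLp 2 (fun i => (if ε i then 1 else -1) / Real.sqrt (2 * n))

/-- The normalized Rademacher average `s*(K)`. -/
def sStar (n : ℕ) (K : Set (EuclideanSpace ℝ (Fin (2 * n)))) : ℝ :=
  (1 / 2 ^ (2 * n)) * ∑ ε : Fin (2 * n) → Bool, suppF K (signVec n ε)

/-- The rotation-invariant probability measure on the unit sphere of `ℝ^{2n}`. -/
def sphereProb (n : ℕ) : Measure (sphere (0 : EuclideanSpace ℝ (Fin (2 * n))) 1) :=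
  ((volume : Measure (EuclideanSpace ℝ (Fin (2 * n)))).toSphere Set.univ)⁻¹ •
    (volume : Measure (EuclideanSpace ℝ (Fin (2 * n)))).toSphere

/-- Half the mean width `M*(K)`. -/
def mStar (n : ℕ) (K : Set (EuclideanSpace ℝ (Fin (2 * n)))) : ℝ :=
  ∫ x : sphere (0 : EuclideanSpace ℝ (Fin (2 * n))) 1, suppF K (x : EuclideanSpace ℝ (Fin (2 * n))) ∂(sphereProb n)

/-- The sign `±1` of a boolean. -/
def radSign (b : Bool) : ℝ := if b then 1 else -1

/-- Squared `L²({−1,1}^m, μ; X_K)`-norm of `f`, with respect to the norm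
(Minkowski gauge) whose unit ball is `K` and the uniform probability measure `μ`. -/
def radL2Sq {d : ℕ} (m : ℕ) (K : Set (EuclideanSpace ℝ (Fin d)))
    (f : (Fin m → Bool) → EuclideanSpace ℝ (Fin d)) : ℝ :=
  (1 / 2 ^ m) * ∑ t : Fin m → Bool, gauge K (f t) ^ 2

/-- The Rademacher projection `R_m f = ∑ᵢ (∫ f rᵢ dμ) rᵢ`. -/
def radProj {d : ℕ} (m : ℕ) (f : (Fin m → Bool) → EuclideanSpace ℝ (Fin d)) :
    (Fin m → Bool) → EuclideanSpace ℝ (Fin d) :=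
  fun t => ∑ i : Fin m,
    radSign (t i) • ((1 / 2 ^ m : ℝ) • ∑ s : Fin m → Bool, radSign (s i) • f s)

/-- The Rademacher projection (K-convexity) constant `‖Rad‖_{X_K}` of the normed
space whose unit ball is `K`: `sup_m ‖R_m‖`. -/
def radConst {d : ℕ} (K : Set (EuclideanSpace ℝ (Fin d))) : ℝ :=
  sSup {c : ℝ | ∃ m : ℕ, ∃ f : (Fin m → Bool) → EuclideanSpace ℝ (Fin d),
    radL2Sq m K f ≤ 1 ∧ c = Real.sqrt (radL2Sq m K (radProj m f))}

/-- Volume ratio `Vol(K)/Vol(B^{2n})`. -/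
def volRatio {d : ℕ} (K : Set (EuclideanSpace ℝ (Fin d))) : ℝ :=
  (volume K).toReal / (volume (closedBall (0 : EuclideanSpace ℝ (Fin d)) 1)).toReal


section Aux
open scoped Pointwise

variable {n : ℕ}

lemma Jstd_apply_even (x : EuclideanSpace ℝ (Fin (2*n))) (j : ℕ) (h : 2*j < 2*n) (h2 : 2*j+1 < 2*n) :
    Jstd n x ⟨2*j, h⟩ = - x ⟨2*j+1, h2⟩ := by
  simp [Jstd, Nat.mul_mod_right]

lemma Jstd_apply_odd (x : EuclideanSpace ℝ (Fin (2*n))) (j : ℕ) (h : 2*j+1 < 2*n) (h2 : 2*j < 2*n) :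
    Jstd n x ⟨2*j+1, h⟩ = x ⟨2*j, h2⟩ := by
  have : (2*j+1) % 2 = 1 := by omega
  simp [Jstd, this]

lemma sum_range_two_mul (f : ℕ → ℝ) (n : ℕ) :
    ∑ i ∈ Finset.range (2*n), f i = ∑ j ∈ Finset.range n, (f (2*j) + f (2*j+1)) := by
  induction n with
  | zero => simp
  | succ m ih =>
    have : 2 * (m+1) = (2*m + 1) + 1 := by omega
    rw [this, Finset.sum_range_succ, Finset.sum_range_succ, ih, Finset.sum_range_succ]
    ring

/-- Generic pairing: sum of F over Fin (2n) as pair sums. -/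
lemma sum_fin_pairs (F : Fin (2*n) → ℝ) :
    ∑ i : Fin (2*n), F i
      = ∑ j ∈ Finset.range n,
          ((if h : 2*j < 2*n then F ⟨2*j, h⟩ else 0) + (if h : 2*j+1 < 2*n then F ⟨2*j+1, h⟩ else 0)) := by
  have e1 : ∑ i : Fin (2*n), F i = ∑ i : Fin (2*n), (fun k => if h : k < 2*n then F ⟨k, h⟩ else 0) (i : ℕ) := by
    apply Finset.sum_congr rfl
    intro i _
    simp [i.isLt]
  rw [e1, Fin.sum_univ_eq_sum_range (fun k => if h : k < 2*n then F ⟨k, h⟩ else 0) (2*n), sum_range_two_mul]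

lemma sum_mul_J (x y : EuclideanSpace ℝ (Fin (2*n))) :
    ∑ i : Fin (2*n), (Jstd n x i) * (Jstd n y i) = ∑ i : Fin (2*n), x i * y i := by
  rw [sum_fin_pairs (fun i => Jstd n x i * Jstd n y i), sum_fin_pairs (fun i => x i * y i)]
  apply Finset.sum_congr rfl
  intro j hj
  have hj' : j < n := Finset.mem_range.mp hj
  have h1 : 2*j < 2*n := by omega
  have h2 : 2*j+1 < 2*n := by omega
  simp only [h1, h2, dif_pos]
  rw [Jstd_apply_even x j h1 h2, Jstd_apply_even y j h1 h2,
      Jstd_apply_odd x j h2 h1, Jstd_apply_odd y j h2 h1]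
  ring

lemma sum_mul_J_self (x y : EuclideanSpace ℝ (Fin (2*n))) :
    ∑ i : Fin (2*n), x i * (Jstd n y i) = - ∑ i : Fin (2*n), (Jstd n x i) * y i := by
  rw [sum_fin_pairs (fun i => x i * Jstd n y i), sum_fin_pairs (fun i => Jstd n x i * y i),
    ← Finset.sum_neg_distrib]
  apply Finset.sum_congr rfl
  intro j hj
  have hj' : j < n := Finset.mem_range.mp hj
  have h1 : 2*j < 2*n := by omega
  have h2 : 2*j+1 < 2*n := by omega
  simp only [h1, h2, dif_pos]
  rw [Jstd_apply_even y j h1 h2, Jstd_apply_odd y j h2 h1,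
      Jstd_apply_even x j h1 h2, Jstd_apply_odd x j h2 h1]
  ring

lemma Jstd_add (x y : EuclideanSpace ℝ (Fin (2*n))) :
    Jstd n (x + y) = Jstd n x + Jstd n y := by
  ext i
  simp only [Jstd, PiLp.add_apply]
  split <;> ring

lemma Jstd_smul (c : ℝ) (x : EuclideanSpace ℝ (Fin (2*n))) :
    Jstd n (c • x) = c • Jstd n x := by
  ext i
  simp only [Jstd, PiLp.smul_apply, smul_eq_mul]
  split <;> ring

lemma Jstd_Jstd (x : EuclideanSpace ℝ (Fin (2*n))) : Jstd n (Jstd n x) = -x := by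
  ext i
  rcases Nat.even_or_odd (i : ℕ) with he | ho
  · obtain ⟨j, hj⟩ := he
    have h1 : 2*j < 2*n := by have := i.isLt; omega
    have h2 : 2*j+1 < 2*n := by have := i.isLt; omega
    have hi : i = ⟨2*j, h1⟩ := Fin.ext (by simp only [Fin.val_mk]; omega)
    rw [hi, Jstd_apply_even _ j h1 h2, Jstd_apply_odd _ j h2 h1]
    simp
  · obtain ⟨j, hj⟩ := ho
    have h1 : 2*j < 2*n := by have := i.isLt; omega
    have h2 : 2*j+1 < 2*n := by have := i.isLt; omega
    have hi : i = ⟨2*j+1, h2⟩ := Fin.ext (by simp only [Fin.val_mk]; omega)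
    rw [hi, Jstd_apply_odd _ j h2 h1, Jstd_apply_even _ j h1 h2]
    simp

lemma Jstd_neg (x : EuclideanSpace ℝ (Fin (2*n))) : Jstd n (-x) = - Jstd n x := by
  have := Jstd_smul (n := n) (-1 : ℝ) x
  simpa using this

lemma inner_Jstd_Jstd (x y : EuclideanSpace ℝ (Fin (2*n))) :
    (inner ℝ (Jstd n x) (Jstd n y) : ℝ) = inner ℝ x y := by
  rw [PiLp.inner_apply, PiLp.inner_apply]
  simpa [RCLike.inner_apply, conj_trivial] using sum_mul_J y x

lemma norm_Jstd (x : EuclideanSpace ℝ (Fin (2*n))) : ‖Jstd n x‖ = ‖x‖ := by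
  have h := inner_Jstd_Jstd x x
  rw [real_inner_self_eq_norm_sq, real_inner_self_eq_norm_sq] at h
  nlinarith [norm_nonneg (Jstd n x), norm_nonneg x]

lemma inner_Jstd_self (x : EuclideanSpace ℝ (Fin (2*n))) :
    (inner ℝ x (Jstd n x) : ℝ) = 0 := by
  have h := sum_mul_J_self x x
  rw [PiLp.inner_apply]
  simp only [RCLike.inner_apply, conj_trivial]
  have h2 : ∑ i : Fin (2*n), Jstd n x i * x i = ∑ i : Fin (2*n), x i * Jstd n x i := by
    apply Finset.sum_congr rfl; intros; ring
  rw [h2] at h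
  linarith

def Jequiv (n : ℕ) : EuclideanSpace ℝ (Fin (2*n)) ≃ₗᵢ[ℝ] EuclideanSpace ℝ (Fin (2*n)) :=
  { toFun := Jstd n
    map_add' := Jstd_add
    map_smul' := Jstd_smul
    invFun := fun x => - Jstd n x
    left_inv := fun x => by show -(Jstd n (Jstd n x)) = x; rw [Jstd_Jstd]; simp
    right_inv := fun x => by show Jstd n (-(Jstd n x)) = x; rw [Jstd_neg, Jstd_Jstd]; simp
    norm_map' := norm_Jstd }

@[simp] lemma Jequiv_apply (x : EuclideanSpace ℝ (Fin (2*n))) : Jequiv n x = Jstd n x := rfl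

lemma LIE_volume_image {E : Type*} [NormedAddCommGroup E] [InnerProductSpace ℝ E]
    [MeasurableSpace E] [BorelSpace E] [FiniteDimensional ℝ E]
    (e : E ≃ₗᵢ[ℝ] E) (C : Set E) : volume (e '' C) = volume C := by
  have h1 : e '' C = e.symm ⁻¹' C := by
    ext z
    constructor
    · rintro ⟨x, hx, rfl⟩
      simpa using hx
    · intro hz
      exact ⟨e.symm z, hz, by simp⟩
  have h2 : volume (⇑e.symm ⁻¹' C) = Measure.map (⇑e.symm) volume C := by
    have := MeasurableEquiv.map_apply (μ := (volume : Measure E)) e.symm.toMeasurableEquiv C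
    simpa using this.symm
  rw [h1, h2, (e.symm.measurePreserving).map_eq]

lemma smul_set_image_LIE {E : Type*} [NormedAddCommGroup E] [InnerProductSpace ℝ E]
    (e : E ≃ₗᵢ[ℝ] E) (S : Set ℝ) (A : Set E) : S • ((e : E → E) '' A) = e '' (S • A) := by
  ext z
  constructor
  · rintro ⟨c, hc, w, ⟨a, ha, rfl⟩, rfl⟩
    exact ⟨c • a, ⟨c, hc, a, ha, rfl⟩, by simp⟩
  · rintro ⟨w, ⟨c, hc, a, ha, rfl⟩, rfl⟩
    exact ⟨c, hc, e a, ⟨a, ha, rfl⟩, by simp⟩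

def JS (n : ℕ) : sphere (0 : EuclideanSpace ℝ (Fin (2*n))) 1 ≃ᵐ sphere (0 : EuclideanSpace ℝ (Fin (2*n))) 1 :=
  { toFun := fun x => ⟨Jstd n x, by
      have := x.2
      simp only [mem_sphere_iff_norm, sub_zero] at *
      rw [norm_Jstd]; exact this⟩
    invFun := fun x => ⟨-(Jstd n x), by
      have := x.2
      simp only [mem_sphere_iff_norm, sub_zero] at *
      rw [norm_neg, norm_Jstd]; exact this⟩
    left_inv := fun x => by
      apply Subtype.ext
      show -(Jstd n (Jstd n x)) = x
      rw [Jstd_Jstd]; simp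
    right_inv := fun x => by
      apply Subtype.ext
      show Jstd n (-(Jstd n x)) = x
      rw [Jstd_neg, Jstd_Jstd]; simp
    measurable_toFun := by
      apply Measurable.subtype_mk
      exact ((Jequiv n).continuous.comp continuous_subtype_val).measurable
    measurable_invFun := by
      apply Measurable.subtype_mk
      exact ((Jequiv n).continuous.neg.comp continuous_subtype_val).measurable }

lemma JS_coe (n : ℕ) (x : sphere (0 : EuclideanSpace ℝ (Fin (2*n))) 1) :
    (JS n x : EuclideanSpace ℝ (Fin (2*n))) = Jstd n x := rfl

lemma map_JS_toSphere (n : ℕ) :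
    Measure.map (JS n) (volume : Measure (EuclideanSpace ℝ (Fin (2*n)))).toSphere
      = (volume : Measure (EuclideanSpace ℝ (Fin (2*n)))).toSphere := by
  apply Measure.ext
  intro s hs
  rw [Measure.map_apply (JS n).measurable hs, Measure.toSphere_apply' _ hs,
    Measure.toSphere_apply' _ ((JS n).measurable hs)]
  congr 1
  have hcoe : (Subtype.val '' ((JS n) ⁻¹' s))
      = ((Jequiv n).symm : _ → _) '' (Subtype.val '' s) := by
    ext z
    constructor
    · rintro ⟨x, hx, rfl⟩
      refine ⟨Jstd n x.1, ⟨JS n x, hx, rfl⟩, ?_⟩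
      have := (Jequiv n).symm_apply_apply x.1
      simpa using this
    · rintro ⟨w, ⟨u, hu, rfl⟩, rfl⟩
      refine ⟨(JS n).symm u, ?_, rfl⟩
      simp only [Set.mem_preimage, MeasurableEquiv.apply_symm_apply]
      exact hu
  rw [hcoe, smul_set_image_LIE]
  exact LIE_volume_image _ _

lemma toSphere_univ_pos (n : ℕ) (hn : 1 ≤ n) :
    0 < (volume : Measure (EuclideanSpace ℝ (Fin (2 * n)))).toSphere Set.univ := by
  rw [Measure.toSphere_apply_univ]
  apply ENNReal.mul_pos
  · have : 0 < Module.finrank ℝ (EuclideanSpace ℝ (Fin (2*n))) := by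
      rw [finrank_euclideanSpace]
      simp only [Fintype.card_fin]
      omega
    simp only [ne_eq, Nat.cast_eq_zero]
    omega
  · exact (measure_ball_pos _ _ one_pos).ne'

lemma toSphere_univ_ne_top (n : ℕ) :
    (volume : Measure (EuclideanSpace ℝ (Fin (2 * n)))).toSphere Set.univ ≠ ⊤ :=
  measure_ne_top _ _

instance sphereProb_isProb (n : ℕ) [Fact (1 ≤ n)] : IsProbabilityMeasure (sphereProb n) := by
  constructor
  rw [sphereProb, Measure.smul_apply, smul_eq_mul]
  exact ENNReal.inv_mul_cancel (toSphere_univ_pos n (Fact.out)).ne' (toSphere_univ_ne_top n)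

lemma map_JS_sphereProb (n : ℕ) :
    MeasurePreserving (JS n) (sphereProb n) (sphereProb n) := by
  refine ⟨(JS n).measurable, ?_⟩
  rw [sphereProb, Measure.map_smul, map_JS_toSphere]

lemma integral_comp_JS (n : ℕ) (g : sphere (0 : EuclideanSpace ℝ (Fin (2*n))) 1 → ℝ) :
    ∫ x, g (JS n x) ∂(sphereProb n) = ∫ x, g x ∂(sphereProb n) :=
  (map_JS_sphereProb n).integral_comp (JS n).measurableEmbedding g

section Convex
variable {n : ℕ} {K : Set (EuclideanSpace ℝ (Fin (2*n)))}

lemma suppF_bddAbove (hcomp : IsCompact K) (x : EuclideanSpace ℝ (Fin (2*n))) :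
    BddAbove ((fun y => (inner ℝ x y : ℝ)) '' K) := by
  obtain ⟨R, hR⟩ := hcomp.isBounded.exists_norm_le
  refine ⟨‖x‖ * R, ?_⟩
  rintro z ⟨y, hy, rfl⟩
  calc (inner ℝ x y : ℝ) ≤ ‖x‖ * ‖y‖ := real_inner_le_norm x y
    _ ≤ ‖x‖ * R := by
        have := hR y hy
        nlinarith [norm_nonneg x, norm_nonneg y]

lemma le_suppF (hcomp : IsCompact K) {y : EuclideanSpace ℝ (Fin (2*n))} (hy : y ∈ K)
    (x : EuclideanSpace ℝ (Fin (2*n))) : (inner ℝ x y : ℝ) ≤ suppF K x :=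
  le_csSup (suppF_bddAbove hcomp x) ⟨y, hy, rfl⟩

lemma zero_mem_of_symm (hconv : Convex ℝ K) (hne : K.Nonempty) (hsym : K = -K) : (0 : EuclideanSpace ℝ (Fin (2*n))) ∈ K := by
  obtain ⟨k, hk⟩ := hne
  have hk' : -k ∈ K := by
    rw [hsym]
    simpa using hk
  have := hconv hk hk' (by norm_num : (0:ℝ) ≤ 1/2) (by norm_num : (0:ℝ) ≤ 1/2) (by norm_num)
  simpa using this

lemma suppF_nonneg (hcomp : IsCompact K) (h0 : (0 : EuclideanSpace ℝ (Fin (2*n))) ∈ K)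
    (x : EuclideanSpace ℝ (Fin (2*n))) : 0 ≤ suppF K x := by
  have := le_suppF hcomp h0 x
  simpa using this

lemma suppF_lipschitz (hcomp : IsCompact K) (hne : K.Nonempty) {R : ℝ} (hR0 : 0 ≤ R)
    (hR : ∀ y ∈ K, ‖y‖ ≤ R) :
    LipschitzWith (Real.toNNReal R) (suppF K) := by
  apply LipschitzWith.of_dist_le_mul
  intro x x'
  have key : ∀ a b : EuclideanSpace ℝ (Fin (2*n)), suppF K a - suppF K b ≤ R * dist a b := by
    intro a b
    rw [sub_le_iff_le_add]
    apply csSup_le (hne.image _)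
    rintro z ⟨y, hy, rfl⟩
    have h1 : (inner ℝ a y : ℝ) = inner ℝ b y + inner ℝ (a - b) y := by
      rw [← inner_add_left]
      norm_num
    show (inner ℝ a y : ℝ) ≤ R * dist a b + suppF K b
    rw [h1]
    have h2 : (inner ℝ (a - b) y : ℝ) ≤ ‖a - b‖ * ‖y‖ := real_inner_le_norm _ _
    have h3 : ‖a - b‖ * ‖y‖ ≤ R * dist a b := by
      rw [dist_eq_norm]
      have := hR y hy
      nlinarith [norm_nonneg (a - b), norm_nonneg y]
    have h4 := le_suppF hcomp hy b
    linarith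
  rw [Real.dist_eq, abs_le, Real.coe_toNNReal _ hR0]
  constructor
  · have := key x' x
    rw [dist_comm] at this
    linarith
  · exact key x x'

lemma suppF_integrable (hcomp : IsCompact K) (hne : K.Nonempty) [Fact (1 ≤ n)] :
    Integrable (fun x : sphere (0 : EuclideanSpace ℝ (Fin (2*n))) 1 =>
      suppF K (x : EuclideanSpace ℝ (Fin (2*n)))) (sphereProb n) := by
  obtain ⟨R, hR⟩ := hcomp.isBounded.exists_norm_le
  have hR0 : 0 ≤ R := by
    obtain ⟨k, hk⟩ := hne
    exact le_trans (norm_nonneg k) (hR k hk)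
  have hcont : Continuous (fun x : sphere (0 : EuclideanSpace ℝ (Fin (2*n))) 1 =>
      suppF K (x : EuclideanSpace ℝ (Fin (2*n)))) :=
    ((suppF_lipschitz hcomp hne hR0 hR).continuous).comp continuous_subtype_val
  exact hcont.integrable_of_hasCompactSupport
    (IsCompact.of_isClosed_subset isCompact_univ (isClosed_tsupport _) (Set.subset_univ _))
end Convex

section Main
variable {n : ℕ} {K : Set (EuclideanSpace ℝ (Fin (2*n)))}

lemma ball_subset_of_symm (hconv : Convex ℝ K) (hsym : K = -K)
    {z : EuclideanSpace ℝ (Fin (2*n))} {ε : ℝ} (hz : ball z ε ⊆ K) :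
    ball (0 : EuclideanSpace ℝ (Fin (2*n))) ε ⊆ K := by
  intro w hw
  have hw' : ‖w‖ < ε := by simpa [mem_ball, dist_zero_right] using hw
  have h1 : z + w ∈ K := hz (by simpa [mem_ball, dist_self_add_left] using hw')
  have h2 : z - w ∈ K := hz (by
    simp only [mem_ball, dist_eq_norm]
    simpa using hw')
  have h3 : -(z - w) ∈ K := by
    rw [hsym]
    simpa using h2
  have := hconv h1 h3 (by norm_num : (0:ℝ) ≤ 1/2) (by norm_num : (0:ℝ) ≤ 1/2) (by norm_num)
  have he : (1/2 : ℝ) • (z + w) + (1/2 : ℝ) • (-(z - w)) = w := by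
    module
  rwa [he] at this

lemma suppF_lower (hcomp : IsCompact K) {ε : ℝ} (hε : 0 < ε)
    (hball : ball (0 : EuclideanSpace ℝ (Fin (2*n))) ε ⊆ K)
    {x : EuclideanSpace ℝ (Fin (2*n))} (hx : ‖x‖ = 1) : ε/2 ≤ suppF K x := by
  have hmem : (ε/2) • x ∈ K := by
    apply hball
    simp only [mem_ball, dist_zero_right, norm_smul, hx, mul_one]
    rw [Real.norm_eq_abs, abs_of_pos (by linarith)]
    linarith
  have := le_suppF hcomp hmem x
  rwa [real_inner_smul_right, real_inner_self_eq_norm_sq, hx, one_pow, mul_one] at this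

lemma mStar_pos (hcomp : IsCompact K) (hconv : Convex ℝ K) (hint : (interior K).Nonempty)
    (hsym : K = -K) [Fact (1 ≤ n)] : 0 < mStar n K := by
  obtain ⟨z, hz⟩ := hint
  obtain ⟨ε, hε, hball⟩ := Metric.mem_nhds_iff.mp (mem_interior_iff_mem_nhds.mp hz)
  have hball' : ball (0 : EuclideanSpace ℝ (Fin (2*n))) ε ⊆ K :=
    ball_subset_of_symm hconv hsym hball
  have hne : K.Nonempty := ⟨z, interior_subset hz⟩
  have hint' := suppF_integrable hcomp hne (n := n)
  have hconst : Integrable (fun _ : sphere (0 : EuclideanSpace ℝ (Fin (2*n))) 1 => ε/2)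
      (sphereProb n) := integrable_const _
  have hmono : ∀ x : sphere (0 : EuclideanSpace ℝ (Fin (2*n))) 1,
      ε/2 ≤ suppF K (x : EuclideanSpace ℝ (Fin (2*n))) := by
    intro x
    have hx : ‖(x : EuclideanSpace ℝ (Fin (2*n)))‖ = 1 := by
      have := x.2
      simpa [mem_sphere_iff_norm] using this
    exact suppF_lower hcomp hε hball' hx
  have := integral_mono hconst hint' hmono
  rw [integral_const] at this
  have hμ : (sphereProb n) Set.univ = 1 := measure_univ
  rw [measureReal_def, hμ] at this
  simp only [ENNReal.toReal_one, one_smul] at this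
  calc (0:ℝ) < ε/2 := by linarith
    _ ≤ mStar n K := this
end Main

section Sel
variable {n : ℕ} {K : Set (EuclideanSpace ℝ (Fin (2*n)))}

lemma exists_good_v [Fact (1 ≤ n)] (hcomp : IsCompact K) (hne : K.Nonempty)
    (h0 : (0 : EuclideanSpace ℝ (Fin (2*n))) ∈ K) (hM : 0 < mStar n K) :
    ∃ v : sphere (0 : EuclideanSpace ℝ (Fin (2*n))) 1,
      suppF K (v : EuclideanSpace ℝ (Fin (2*n))) ≤ 3 * mStar n K ∧
      suppF K (Jstd n (v : EuclideanSpace ℝ (Fin (2*n)))) ≤ 3 * mStar n K := by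
  set μ := sphereProb n
  set M := mStar n K with hMdef
  set h : sphere (0 : EuclideanSpace ℝ (Fin (2*n))) 1 → ℝ :=
    fun x => suppF K (x : EuclideanSpace ℝ (Fin (2*n))) with hh
  have hint : Integrable h μ := suppF_integrable hcomp hne
  have hnonneg : (0 : sphere (0 : EuclideanSpace ℝ (Fin (2*n))) 1 → ℝ) ≤ᶠ[ae μ] h :=
    Filter.Eventually.of_forall (fun x => suppF_nonneg hcomp h0 _)
  have hintJ : Integrable (h ∘ (JS n)) μ :=
    (map_JS_sphereProb n).integrable_comp_emb (JS n).measurableEmbedding |>.mpr hint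
  have hJint : ∫ x, h (JS n x) ∂μ = M := integral_comp_JS n h
  have hMint : ∫ x, h x ∂μ = M := rfl
  -- Markov bounds
  have markov1 := mul_meas_ge_le_integral_of_nonneg hnonneg hint (3*M)
  have markov2 := mul_meas_ge_le_integral_of_nonneg
    (Filter.Eventually.of_forall (fun x => suppF_nonneg hcomp h0 _) :
      ∀ᵐ x ∂μ, (0:ℝ) ≤ (h ∘ (JS n)) x) hintJ (3*M)
  rw [hMint] at markov1
  have : ∫ x, (h ∘ JS n) x ∂μ = M := hJint
  rw [this] at markov2
  set A := {x | 3*M ≤ h x}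
  set B := {x | 3*M ≤ (h ∘ JS n) x}
  have hA : (μ A).toReal ≤ 1/3 := by
    by_contra hc
    push_neg at hc
    rw [measureReal_def] at markov1
    nlinarith [ENNReal.toReal_nonneg (a := μ A)]
  have hB : (μ B).toReal ≤ 1/3 := by
    by_contra hc
    push_neg at hc
    rw [measureReal_def] at markov2
    nlinarith [ENNReal.toReal_nonneg (a := μ B)]
  have hunion : A ∪ B ≠ Set.univ := by
    intro hcontra
    have h1 : μ (A ∪ B) ≤ μ A + μ B := measure_union_le A B
    have h2 : (μ (A ∪ B)).toReal ≤ (μ A).toReal + (μ B).toReal := by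
      rw [← ENNReal.toReal_add (measure_ne_top μ A) (measure_ne_top μ B)]
      exact ENNReal.toReal_mono (by
        exact ENNReal.add_ne_top.mpr ⟨measure_ne_top μ A, measure_ne_top μ B⟩) h1
    rw [hcontra] at h2
    have : (μ Set.univ).toReal = 1 := by simp [measure_univ]
    rw [this] at h2
    linarith
  have : ∃ v, v ∉ A ∪ B := by
    by_contra hc
    push_neg at hc
    exact hunion (Set.eq_univ_of_forall hc)
  obtain ⟨v, hv⟩ := this
  simp only [Set.mem_union, not_or, Set.mem_setOf_eq] at hv
  exact ⟨v, le_of_not_ge hv.1, le_of_not_ge hv.2⟩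
end Sel

section Geom
variable {n : ℕ}

lemma norm_combo {v w : EuclideanSpace ℝ (Fin (2*n))} (hv : ‖v‖ = 1) (hw : ‖w‖ = 1)
    (hvw : (inner ℝ v w : ℝ) = 0) (a b : ℝ) : ‖a • v + b • w‖^2 = a^2 + b^2 := by
  have h1 : (inner ℝ w v : ℝ) = 0 := by rw [real_inner_comm]; exact hvw
  rw [← real_inner_self_eq_norm_sq]
  simp only [inner_add_left, inner_add_right, real_inner_smul_left, real_inner_smul_right,
    real_inner_self_eq_norm_sq, hv, hw, hvw, h1]
  rw [norm_smul, norm_smul, hv, hw]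
  simp only [mul_one, Real.norm_eq_abs]
  ring_nf
  simp [sq_abs]

lemma abs_add_le_sqrt_two {a b c : ℝ} (hc : 0 ≤ c) (h : a^2 + b^2 = c^2) :
    |a| + |b| ≤ Real.sqrt 2 * c := by
  have h2 : (|a| + |b|)^2 ≤ (Real.sqrt 2 * c)^2 := by
    have hs : (Real.sqrt 2)^2 = 2 := Real.sq_sqrt (by norm_num)
    have : (Real.sqrt 2 * c)^2 = 2 * c^2 := by rw [mul_pow, hs]
    rw [this, ← h]
    nlinarith [sq_nonneg (|a| - |b|), sq_abs a, sq_abs b]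
  have hn1 : 0 ≤ |a| + |b| := by positivity
  have hn2 : 0 ≤ Real.sqrt 2 * c := by positivity
  nlinarith
end Geom


end Aux

/-- there is a unit vector `v` such that the orthogonal projection of `K`
onto the holomorphic plane `E = span{v, Jv}` lies in the closed disc of radius
`3√2·M*(K)` in `E`. -/
theorem statement3 (n : ℕ) (hn : 1 ≤ n) (K : Set (EuclideanSpace ℝ (Fin (2 * n))))
    (hK : IsConvexBody K) (hsym : K = -K) :
    ∃ v : EuclideanSpace ℝ (Fin (2 * n)), ‖v‖ = 1 ∧
      ∀ y ∈ K,
        ‖(Submodule.orthogonalProjectionOnto (Submodule.span ℝ {v, Jstd n v}) y :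
            EuclideanSpace ℝ (Fin (2 * n)))‖ ≤ 3 * Real.sqrt 2 * mStar n K := by
  have : Fact (1 ≤ n) := ⟨hn⟩
  obtain ⟨hcomp, hconv, hint⟩ := hK
  have hne : K.Nonempty := hint.mono interior_subset
  have h0 : (0 : EuclideanSpace ℝ (Fin (2*n))) ∈ K := zero_mem_of_symm hconv hne hsym
  have hM : 0 < mStar n K := mStar_pos hcomp hconv hint hsym
  obtain ⟨vs, hv1, hv2⟩ := exists_good_v hcomp hne h0 hM
  set v : EuclideanSpace ℝ (Fin (2*n)) := (vs : EuclideanSpace ℝ (Fin (2*n))) with hvdef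
  have hvnorm : ‖v‖ = 1 := mem_sphere_zero_iff_norm.mp vs.2
  set w : EuclideanSpace ℝ (Fin (2*n)) := Jstd n v with hwdef
  have hwnorm : ‖w‖ = 1 := by rw [hwdef, norm_Jstd]; exact hvnorm
  have hvw : (inner ℝ v w : ℝ) = 0 := inner_Jstd_self v
  refine ⟨v, hvnorm, ?_⟩
  intro y hy
  set M := mStar n K with hMdef
  set u : EuclideanSpace ℝ (Fin (2*n)) :=
    (Submodule.orthogonalProjectionOnto (Submodule.span ℝ {v, Jstd n v}) y : EuclideanSpace ℝ (Fin (2*n))) with hudef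
  obtain ⟨a, b, hab⟩ := Submodule.mem_span_pair.mp
    (Submodule.orthogonalProjectionOnto (Submodule.span ℝ {v, Jstd n v}) y).2
  -- ⟪u, y⟫ = ‖u‖²
  have horth : (inner ℝ (y - u) u : ℝ) = 0 :=
    Submodule.starProjection_inner_eq_zero y u
      (Submodule.orthogonalProjectionOnto (Submodule.span ℝ {v, Jstd n v}) y).2
  have hinner : (inner ℝ u y : ℝ) = ‖u‖^2 := by
    have h1 : (inner ℝ y u : ℝ) = inner ℝ (y - u) u + inner ℝ u u := by
      rw [← inner_add_left]
      norm_num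
    rw [real_inner_comm, h1, horth, real_inner_self_eq_norm_sq]
    ring
  -- bounds on inner ℝ products
  have hyneg : -y ∈ K := by rw [hsym]; simpa using hy
  have habs : ∀ z : EuclideanSpace ℝ (Fin (2*n)), suppF K z ≤ 3*M → |(inner ℝ z y : ℝ)| ≤ 3*M := by
    intro z hz
    rw [abs_le]
    constructor
    · have h2 : (inner ℝ z (-y) : ℝ) ≤ suppF K z := le_suppF hcomp hyneg z
      rw [inner_neg_right] at h2
      linarith
    · exact le_trans (le_suppF hcomp hy z) hz
  have hva := habs v hv1
  have hwa := habs w hv2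
  -- expand inner ℝ u y
  have hexp : (inner ℝ u y : ℝ) = a * inner ℝ v y + b * inner ℝ w y := by
    rw [hudef, ← hab]
    rw [inner_add_left, real_inner_smul_left, real_inner_smul_left]
  have hbound : (inner ℝ u y : ℝ) ≤ (|a| + |b|) * (3*M) := by
    rw [hexp]
    have h1 : a * (inner ℝ v y : ℝ) ≤ |a| * (3*M) := by
      calc a * (inner ℝ v y : ℝ) ≤ |a * (inner ℝ v y : ℝ)| := le_abs_self _
        _ = |a| * |(inner ℝ v y : ℝ)| := abs_mul _ _
        _ ≤ |a| * (3*M) := by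
            apply mul_le_mul_of_nonneg_left hva (abs_nonneg a)
    have h2 : b * (inner ℝ w y : ℝ) ≤ |b| * (3*M) := by
      calc b * (inner ℝ w y : ℝ) ≤ |b * (inner ℝ w y : ℝ)| := le_abs_self _
        _ = |b| * |(inner ℝ w y : ℝ)| := abs_mul _ _
        _ ≤ |b| * (3*M) := by
            apply mul_le_mul_of_nonneg_left hwa (abs_nonneg b)
    linarith [h1, h2]
  have hnormu : ‖u‖^2 = a^2 + b^2 := by
    rw [hudef, ← hab]
    exact norm_combo hvnorm hwnorm hvw a b
  have hab2 : |a| + |b| ≤ Real.sqrt 2 * ‖u‖ := by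
    apply abs_add_le_sqrt_two (norm_nonneg u)
    rw [hnormu]
  have key : ‖u‖^2 ≤ Real.sqrt 2 * ‖u‖ * (3*M) := by
    calc ‖u‖^2 = (inner ℝ u y : ℝ) := hinner.symm
      _ ≤ (|a| + |b|) * (3*M) := hbound
      _ ≤ Real.sqrt 2 * ‖u‖ * (3*M) := by
          apply mul_le_mul_of_nonneg_right hab2 (by linarith)
  rcases eq_or_lt_of_le (norm_nonneg u) with h | h
  · rw [← h]
    positivity
  · nlinarith [Real.sqrt_nonneg 2]

end
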